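/- arXiv:1505.00064 — 5 statements merged into one kernel-verified Lean document; each statement's English description precedes it below -/
import Mathlib

section
/- (Menet) Every chaotic continuous linear operator on a Banach space is reiteratively hypercyclic. -/
open Filter Set
open Topology

/-- Upper Banach density of a set of natural numbers:
`Bd(A) = limsup_{s→∞} (limsup_{k→∞} |A ∩ [k+1, k+s]|) / s`. -/
noncomputable def upperBanachDensity (A : Set ℕ) : ℝ :=
  Filter.limsup (fun s : ℕ =>
    (Filter.limsup (fun k : ℕ => ((A ∩ Set.Ioc k (k + s)).ncard : ℝ)) Filter.atTop) / s)
    Filter.atTop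

/-- `T` is hypercyclic: some vector has dense orbit. -/
def Hypercyclic {X : Type*} [NormedAddCommGroup X] [NormedSpace ℂ X]
    (T : X →L[ℂ] X) : Prop :=
  ∃ x : X, Dense (Set.range fun n : ℕ => (T ^ n) x)

/-- `T` is chaotic: hypercyclic with a dense set of periodic points. -/
def Chaotic {X : Type*} [NormedAddCommGroup X] [NormedSpace ℂ X]
    (T : X →L[ℂ] X) : Prop :=
  Hypercyclic T ∧ Dense {x : X | ∃ k : ℕ, 1 ≤ k ∧ (T ^ k) x = x}

/-- `T` is reiteratively hypercyclic: some `x` such that for every nonempty open `U`,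
`N(x,U) = {n : T^n x ∈ U}` has positive upper Banach density. -/
def ReiterativelyHypercyclic {X : Type*} [NormedAddCommGroup X] [NormedSpace ℂ X]
    (T : X →L[ℂ] X) : Prop :=
  ∃ x : X, ∀ U : Set X, IsOpen U → U.Nonempty →
    0 < upperBanachDensity {n : ℕ | (T ^ n) x ∈ U}

lemma ncard_Ioc_nat (k s : ℕ) : (Set.Ioc k (k + s)).ncard = s := by
  rw [← Finset.coe_Ioc, Set.ncard_coe_finset, Nat.card_Ioc]
  omega

lemma density_pos (A : Set ℕ) (d : ℕ) (hd : 1 ≤ d)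
    (h : ∀ L M : ℕ, ∃ n0, M ≤ n0 ∧ ∀ j ≤ L, n0 + j * d ∈ A) :
    0 < upperBanachDensity A := by
  have hdR : (0:ℝ) < d := by exact_mod_cast hd
  have hcount_le : ∀ s k : ℕ, ((A ∩ Set.Ioc k (k + s)).ncard : ℝ) ≤ s := by
    intro s k
    have h1 : (A ∩ Set.Ioc k (k + s)).ncard ≤ (Set.Ioc k (k + s)).ncard :=
      Set.ncard_le_ncard inter_subset_right (Set.finite_Ioc _ _)
    rw [_root_.ncard_Ioc_nat] at h1
    exact_mod_cast h1
  have hcount_nonneg : ∀ s k : ℕ, (0:ℝ) ≤ ((A ∩ Set.Ioc k (k + s)).ncard : ℝ) := by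
    intro s k; positivity
  -- inner limsup lower bound
  have inner_ge : ∀ s : ℕ, 1 ≤ s →
      (s : ℝ) / d ≤ Filter.limsup (fun k : ℕ => ((A ∩ Set.Ioc k (k + s)).ncard : ℝ)) Filter.atTop := by
    intro s hs
    apply Filter.le_limsup_of_frequently_le ?_ (Filter.isBoundedUnder_of ⟨(s:ℝ), hcount_le s⟩)
    rw [Filter.frequently_atTop]
    intro M
    obtain ⟨n0, hn0, hAP⟩ := h s (M + 1)
    refine ⟨n0 - 1, by omega, ?_⟩
    set c : ℕ := (s - 1) / d + 1 with hc
    have hsc : s ≤ c * d := by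
      have h2 : d * ((s - 1) / d) + (s - 1) % d = s - 1 := Nat.div_add_mod _ _
      have h3 : (s - 1) % d < d := Nat.mod_lt _ hd
      have h4 : c * d = d * ((s - 1) / d) + d := by rw [hc]; ring
      omega
    have hsub : (↑((Finset.range c).image (fun j => n0 + j * d)) : Set ℕ)
        ⊆ A ∩ Set.Ioc (n0 - 1) (n0 - 1 + s) := by
      intro m hm
      simp only [Finset.coe_image, Finset.coe_range, Set.mem_image, Set.mem_Iio] at hm
      obtain ⟨j, hj, rfl⟩ := hm
      have hjd : j * d ≤ s - 1 := by
        have : j ≤ (s - 1) / d := by omega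
        exact (Nat.le_div_iff_mul_le hd).mp this
      have hjs : j ≤ s := le_trans (Nat.le_mul_of_pos_right j hd) (by omega)
      refine ⟨hAP j hjs, ?_, ?_⟩ <;> omega
    have hcard : ((Finset.range c).image (fun j => n0 + j * d)).card = c := by
      rw [Finset.card_image_of_injective _ ?_, Finset.card_range]
      intro a b hab
      simp only at hab
      exact Nat.eq_of_mul_eq_mul_right hd (by omega)
    have hle : c ≤ (A ∩ Set.Ioc (n0 - 1) (n0 - 1 + s)).ncard := by
      have := Set.ncard_le_ncard hsub ((Set.finite_Ioc _ _).inter_of_right A)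
      rwa [Set.ncard_coe_finset, hcard] at this
    have : (s : ℝ) / d ≤ c := by
      rw [div_le_iff₀ hdR]
      exact_mod_cast hsc
    exact le_trans this (by exact_mod_cast hle)
  -- outer
  have houter_le : ∀ s : ℕ, 1 ≤ s →
      (Filter.limsup (fun k : ℕ => ((A ∩ Set.Ioc k (k + s)).ncard : ℝ)) Filter.atTop) / s ≤ 1 := by
    intro s hs
    have hsR : (0:ℝ) < s := by exact_mod_cast hs
    have : Filter.limsup (fun k : ℕ => ((A ∩ Set.Ioc k (k + s)).ncard : ℝ)) Filter.atTop ≤ s :=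
      Filter.limsup_le_of_le
        (Filter.isCoboundedUnder_le_of_le _ (hcount_nonneg s))
        (Filter.Eventually.of_forall (hcount_le s))
    rw [div_le_one hsR]
    exact this
  have houter_ge : ∀ s : ℕ, 1 ≤ s →
      (1:ℝ)/d ≤ (Filter.limsup (fun k : ℕ => ((A ∩ Set.Ioc k (k + s)).ncard : ℝ)) Filter.atTop) / s := by
    intro s hs
    have hsR : (0:ℝ) < s := by exact_mod_cast hs
    have h1 := inner_ge s hs
    calc (1:ℝ)/d = ((s:ℝ)/d)/s := by field_simp
    _ ≤ _ / s := by gcongr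
  have hfinal : (1:ℝ)/d ≤ upperBanachDensity A := by
    apply Filter.le_limsup_of_frequently_le
    · exact ((Filter.eventually_atTop.mpr ⟨1, houter_ge⟩).frequently)
    · exact ⟨1, Filter.eventually_atTop.mpr ⟨1, houter_le⟩⟩
  have : (0:ℝ) < 1/d := by positivity
  linarith


/-- (Menet) Every chaotic continuous linear operator on a Banach space is reiteratively
hypercyclic. -/
theorem chaotic_imp_reiterativelyHypercyclic
    {X : Type*} [NormedAddCommGroup X] [NormedSpace ℂ X] [CompleteSpace X]
    (T : X →L[ℂ] X) (hT : Chaotic T) : ReiterativelyHypercyclic T := by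
  obtain ⟨x, hx⟩ := hT.1
  refine ⟨x, fun U hU hUne => ?_⟩
  rcases subsingleton_or_nontrivial X with hX | hX
  · apply density_pos _ 1 le_rfl
    intro L M
    refine ⟨M, le_rfl, fun j _ => ?_⟩
    obtain ⟨u, hu⟩ := hUne
    show (T ^ (M + j * 1)) x ∈ U
    rw [Subsingleton.elim ((T ^ (M + j * 1)) x) u]
    exact hu
  · haveI : ∀ z : X, NeBot (𝓝[≠] z) := fun z => Module.punctured_nhds_neBot ℂ X z
    obtain ⟨p, hpP, hpU⟩ := hT.2.exists_mem_open hU hUne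
    obtain ⟨d, hd1, hpd⟩ := hpP
    obtain ⟨ε, hε, hball⟩ := Metric.isOpen_iff.mp hU p hpU
    apply density_pos _ d hd1
    intro L M
    -- bound on the operator norms along the progression
    set C : ℝ := 1 + ∑ j ∈ Finset.range (L + 1), ‖T ^ (j * d)‖ with hC
    have hsum_nonneg : (0:ℝ) ≤ ∑ j ∈ Finset.range (L + 1), ‖T ^ (j * d)‖ :=
      Finset.sum_nonneg fun j _ => norm_nonneg _
    have hC1 : (1:ℝ) ≤ C := le_add_of_nonneg_right hsum_nonneg
    have hC0 : (0:ℝ) < C := lt_of_lt_of_le one_pos hC1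
    have hCj : ∀ j ≤ L, ‖T ^ (j * d)‖ ≤ C := by
      intro j hj
      have : ‖T ^ (j * d)‖ ≤ ∑ i ∈ Finset.range (L + 1), ‖T ^ (i * d)‖ :=
        Finset.single_le_sum (fun i _ => norm_nonneg (T ^ (i * d)))
          (Finset.mem_range.mpr (by omega))
      linarith
    have hδ : 0 < ε / C := div_pos hε hC0
    -- tail of the orbit is dense
    have htail : Dense {y : X | ∃ n, M ≤ n ∧ (T ^ n) x = y} := by
      have hfin : ((fun n : ℕ => (T ^ n) x) '' Set.Iio M).Finite :=
        (Set.finite_Iio M).image _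
      have hsub : (Set.range fun n : ℕ => (T ^ n) x) \ ((fun n : ℕ => (T ^ n) x) '' Set.Iio M) ⊆ {y : X | ∃ n, M ≤ n ∧ (T ^ n) x = y} := by
        rintro y ⟨⟨n, rfl⟩, hy2⟩
        by_cases hn : M ≤ n
        · exact ⟨n, hn, rfl⟩
        · exact absurd ⟨n, Set.mem_Iio.mpr (by omega), rfl⟩ hy2
      exact (hx.diff_finite hfin).mono hsub
    obtain ⟨y, hy, hyball⟩ := htail.exists_mem_open Metric.isOpen_ball
      ⟨p, Metric.mem_ball_self hδ⟩
    obtain ⟨n0, hn0M, rfl⟩ := hy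
    refine ⟨n0, hn0M, fun j hj => ?_⟩
    apply hball
    have hperm : ∀ m : ℕ, ((T ^ d) ^ m) p = p := by
      intro m
      induction m with
      | zero => rfl
      | succ n ih => rw [pow_succ, ContinuousLinearMap.mul_apply, hpd, ih]
    have hper : (T ^ (j * d)) p = p := by
      rw [mul_comm, pow_mul]; exact hperm j
    have hsplit : (T ^ (n0 + j * d)) x = (T ^ (j * d)) ((T ^ n0) x) := by
      rw [add_comm, pow_add, ContinuousLinearMap.mul_apply]
    rw [Metric.mem_ball, dist_eq_norm, hsplit]
    have : (T ^ (j * d)) ((T ^ n0) x) - p = (T ^ (j * d)) ((T ^ n0) x - p) := by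
      rw [map_sub, hper]
    rw [this]
    have hbd : ‖(T ^ (j * d)) ((T ^ n0) x - p)‖ ≤ ‖T ^ (j * d)‖ * ‖(T ^ n0) x - p‖ :=
      ContinuousLinearMap.le_opNorm _ _
    have hyb : ‖(T ^ n0) x - p‖ < ε / C := by
      rw [Metric.mem_ball, dist_eq_norm] at hyball; exact hyball
    calc ‖(T ^ (j * d)) ((T ^ n0) x - p)‖ ≤ ‖T ^ (j * d)‖ * ‖(T ^ n0) x - p‖ := hbd
    _ ≤ C * ‖(T ^ n0) x - p‖ := by
        apply mul_le_mul_of_nonneg_right (hCj j hj) (norm_nonneg _)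
    _ < C * (ε / C) := by
        apply mul_lt_mul_of_pos_left hyb hC0
    _ = ε := by field_simp
end

section
/- Let −∞ < α < β < ∞ and a₀, a₁, b₀, b₁ ∈ ℂ. Then there exists a twice continuously differentiable function f : [α, β] → ℂ such that f(α) = a₀, f'(α) = a₁, f(β) = b₀, f'(β) = b₁, sup_{x ∈ [α,β]} |f(x)| ≤ |a₀ + b₀|/2 + |a₀ − b₀|/2 + (β − α)(|a₁| + |b₁|)/5, and ∫_{α}^{β} |f''(x)|² dx ≤ 24|a₀ − b₀|²/(β − α)³ + 12(|a₁|² + |b₁|²)/(β − α). -/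
open Real MeasureTheory intervalIntegral

private lemma normSq_eq' (z : ℂ) : ‖z‖^2 = z.re^2 + z.im^2 := by
  rw [Complex.sq_norm, Complex.normSq_apply]; ring

private lemma sq_integral_key (L A B : ℝ) :
    (∫ x in (0:ℝ)..L, (A + B*x)^2) = A^2*L + A*B*L^2 + B^2*L^3/3 := by
  have h : ∀ x : ℝ, (A + B*x)^2 = A^2 + (2*A*B)*x + B^2*x^2 := fun x => by ring
  simp_rw [h]
  rw [intervalIntegral.integral_add (by apply Continuous.intervalIntegrable; continuity)
      (by apply Continuous.intervalIntegrable; continuity),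
    intervalIntegral.integral_add (by apply Continuous.intervalIntegrable; continuity)
      (by apply Continuous.intervalIntegrable; continuity),
    intervalIntegral.integral_const_mul]
  simp [integral_id, integral_pow]
  ring

set_option maxHeartbeats 1000000 in
private lemma energy_key (L dr di ar ai br bi : ℝ) (hL : 0 < L) :
    ((2*L*(-3*dr - L*(2*ar+br)))^2 * L
      + 2*L*(-3*dr - L*(2*ar+br)) * (6*(2*dr + L*(ar+br))) * L^2
      + (6*(2*dr + L*(ar+br)))^2 * L^3/3
      + ((2*L*(-3*di - L*(2*ai+bi)))^2 * L
      + 2*L*(-3*di - L*(2*ai+bi)) * (6*(2*di + L*(ai+bi))) * L^2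
      + (6*(2*di + L*(ai+bi)))^2 * L^3/3)) * (L^3 * L)
    ≤ (24*(dr^2+di^2)*L + L^3*(12*(ar^2+ai^2+(br^2+bi^2)))) * L^6 := by
  have h7 : (0:ℝ) ≤ L^7 := by positivity
  have h9 : (0:ℝ) ≤ L^9 := by positivity
  nlinarith [mul_nonneg h7 (sq_nonneg (dr - L*ar)), mul_nonneg h7 (sq_nonneg (di - L*ai)),
    mul_nonneg h7 (sq_nonneg (dr - L*br)), mul_nonneg h7 (sq_nonneg (di - L*bi)),
    mul_nonneg h9 (sq_nonneg (ar - br)), mul_nonneg h9 (sq_nonneg (ai - bi))]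

set_option maxHeartbeats 1000000 in
/-- Lemma A.2 of Bès–Martin–Peris–Shkarin: given `α < β` and complex boundary data
`a₀, a₁, b₀, b₁`, there is a `C²` function `f : [α,β] → ℂ` with the prescribed values
and derivatives at the endpoints, such that
`sup |f| ≤ |a₀+b₀|/2 + |a₀−b₀|/2 + (β−α)(|a₁|+|b₁|)/5` and
`∫ |f''|² ≤ 24|a₀−b₀|²/(β−α)³ + 12(|a₁|²+|b₁|²)/(β−α)`. -/
theorem exists_C2_interpolant
    (α β : ℝ) (hαβ : α < β) (a₀ a₁ b₀ b₁ : ℂ) :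
    ∃ f f' f'' : ℝ → ℂ,
      (∀ x ∈ Set.Icc α β, HasDerivWithinAt f (f' x) (Set.Icc α β) x) ∧
      (∀ x ∈ Set.Icc α β, HasDerivWithinAt f' (f'' x) (Set.Icc α β) x) ∧
      ContinuousOn f'' (Set.Icc α β) ∧
      f α = a₀ ∧ f' α = a₁ ∧ f β = b₀ ∧ f' β = b₁ ∧
      (∀ x ∈ Set.Icc α β,
        ‖f x‖ ≤ ‖a₀ + b₀‖ / 2 + ‖a₀ - b₀‖ / 2 + (β - α) * (‖a₁‖ + ‖b₁‖) / 5) ∧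
      (∫ x in α..β, ‖f'' x‖ ^ 2) ≤
        24 * ‖a₀ - b₀‖ ^ 2 / (β - α) ^ 3 + 12 * (‖a₁‖ ^ 2 + ‖b₁‖ ^ 2) / (β - α) := by
  set L : ℝ := β - α with hLdef
  have hL : 0 < L := sub_pos.mpr hαβ
  have hL0 : (L:ℂ) ≠ 0 := by exact_mod_cast hL.ne'
  set c2 : ℂ := (-3*(a₀-b₀) - (L:ℂ)*(2*a₁+b₁)) / (L:ℂ)^2 with hc2
  set c3 : ℂ := (2*(a₀-b₀) + (L:ℂ)*(a₁+b₁)) / (L:ℂ)^3 with hc3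
  have hd1 : ∀ x : ℝ, HasDerivAt
      (fun y : ℝ => a₀ + a₁*((y:ℂ)-α) + c2*((y:ℂ)-α)^2 + c3*((y:ℂ)-α)^3)
      (a₁ + 2*c2*((x:ℂ)-α) + 3*c3*((x:ℂ)-α)^2) x := by
    intro x
    have h0 : HasDerivAt (fun z : ℂ => z - (α:ℂ)) 1 (x:ℂ) := (hasDerivAt_id _).sub_const _
    have h : HasDerivAt (fun z : ℂ => a₀ + a₁*(z-α) + c2*(z-α)^2 + c3*(z-α)^3)
        (a₁ + 2*c2*((x:ℂ)-α) + 3*c3*((x:ℂ)-α)^2) (x:ℂ) := by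
      have := (((hasDerivAt_const (x:ℂ) a₀).add (h0.const_mul a₁)).add
        ((h0.pow 2).const_mul c2)).add ((h0.pow 3).const_mul c3)
      refine this.congr_deriv ?_
      push_cast
      ring
    exact h.comp_ofReal
  have hd2 : ∀ x : ℝ, HasDerivAt
      (fun y : ℝ => a₁ + 2*c2*((y:ℂ)-α) + 3*c3*((y:ℂ)-α)^2)
      (2*c2 + 6*c3*((x:ℂ)-α)) x := by
    intro x
    have h0 : HasDerivAt (fun z : ℂ => z - (α:ℂ)) 1 (x:ℂ) := (hasDerivAt_id _).sub_const _
    have h : HasDerivAt (fun z : ℂ => a₁ + 2*c2*(z-α) + 3*c3*(z-α)^2)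
        (2*c2 + 6*c3*((x:ℂ)-α)) (x:ℂ) := by
      have := ((hasDerivAt_const (x:ℂ) a₁).add (h0.const_mul (2*c2))).add
        ((h0.pow 2).const_mul (3*c3))
      refine this.congr_deriv ?_
      push_cast
      ring
    exact h.comp_ofReal
  have hβα : (β:ℂ) - (α:ℂ) = (L:ℂ) := by push_cast [hLdef]; ring
  refine ⟨fun x => a₀ + a₁*((x:ℂ)-α) + c2*((x:ℂ)-α)^2 + c3*((x:ℂ)-α)^3,
    fun x => a₁ + 2*c2*((x:ℂ)-α) + 3*c3*((x:ℂ)-α)^2,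
    fun x => 2*c2 + 6*c3*((x:ℂ)-α),
    fun x _ => (hd1 x).hasDerivWithinAt,
    fun x _ => (hd2 x).hasDerivWithinAt,
    (Continuous.continuousOn (by fun_prop)),
    by simp, by simp, ?_, ?_, ?_, ?_⟩
  · -- f β = b₀
    beta_reduce
    rw [hβα, hc2, hc3]
    field_simp
    ring
  · -- f' β = b₁
    beta_reduce
    rw [hβα, hc2, hc3]
    field_simp
    ring
  · -- sup bound
    intro x hx
    obtain ⟨hx1, hx2⟩ := hx
    beta_reduce
    set t : ℝ := (x - α)/L with htdef
    have ht0 : 0 ≤ t := div_nonneg (by linarith) hL.le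
    have ht1 : t ≤ 1 := (div_le_one hL).mpr (by simp [hLdef]; linarith)
    have hsub : (x:ℂ) - (α:ℂ) = ((L*t : ℝ) : ℂ) := by
      rw [htdef]
      push_cast
      field_simp
    have hrep : a₀ + a₁*((x:ℂ)-α) + c2*((x:ℂ)-α)^2 + c3*((x:ℂ)-α)^3 =
        (a₀+b₀)/2 + (a₀-b₀)/2 * ((4*t^3-6*t^2+1 : ℝ):ℂ)
        + (L:ℂ)*a₁*((t^3-2*t^2+t : ℝ):ℂ) + (L:ℂ)*b₁*((t^3-t^2 : ℝ):ℂ) := by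
      rw [hsub, hc2, hc3]
      push_cast
      field_simp
      ring
    rw [hrep]
    have hg1 : |4*t^3-6*t^2+1| ≤ 1 := by
      rw [abs_le]
      constructor <;> nlinarith [sq_nonneg (t-1), sq_nonneg t, sq_nonneg (2*t-1)]
    have hg2 : |t^3-2*t^2+t| ≤ 4/27 := by
      rw [abs_le]
      constructor <;> nlinarith [sq_nonneg (3*t-1), sq_nonneg t, sq_nonneg (1-t),
        mul_nonneg ht0 (sq_nonneg (1-t))]
    have hg3 : |t^3-t^2| ≤ 4/27 := by
      rw [abs_le]
      constructor <;> nlinarith [sq_nonneg (3*t-2), sq_nonneg t, sq_nonneg (1-t),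
        mul_nonneg (sq_nonneg t) (by linarith : (0:ℝ) ≤ 1 - t)]
    have e1 : ‖(a₀+b₀)/2‖ = ‖a₀+b₀‖/2 := by simp [norm_div]
    have e2 : ‖(a₀-b₀)/2 * ((4*t^3-6*t^2+1 : ℝ):ℂ)‖ ≤ ‖a₀-b₀‖/2 := by
      rw [norm_mul, Complex.norm_real, norm_div, Real.norm_eq_abs]
      simp only [Complex.norm_ofNat]
      nlinarith [mul_nonneg (norm_nonneg (a₀-b₀)) (sub_nonneg.mpr hg1),
        abs_nonneg (4*t^3-6*t^2+1)]
    have e3 : ‖(L:ℂ)*a₁*((t^3-2*t^2+t : ℝ):ℂ)‖ ≤ L*‖a₁‖*(4/27) := by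
      rw [norm_mul, norm_mul, Complex.norm_real, Complex.norm_real,
        Real.norm_eq_abs, Real.norm_eq_abs, abs_of_pos hL]
      nlinarith [mul_nonneg (mul_nonneg hL.le (norm_nonneg a₁)) (sub_nonneg.mpr hg2),
        abs_nonneg (t^3-2*t^2+t)]
    have e4 : ‖(L:ℂ)*b₁*((t^3-t^2 : ℝ):ℂ)‖ ≤ L*‖b₁‖*(4/27) := by
      rw [norm_mul, norm_mul, Complex.norm_real, Complex.norm_real,
        Real.norm_eq_abs, Real.norm_eq_abs, abs_of_pos hL]
      nlinarith [mul_nonneg (mul_nonneg hL.le (norm_nonneg b₁)) (sub_nonneg.mpr hg3),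
        abs_nonneg (t^3-t^2)]
    have tri : ‖(a₀+b₀)/2 + (a₀-b₀)/2 * ((4*t^3-6*t^2+1 : ℝ):ℂ)
        + (L:ℂ)*a₁*((t^3-2*t^2+t : ℝ):ℂ) + (L:ℂ)*b₁*((t^3-t^2 : ℝ):ℂ)‖
        ≤ ‖(a₀+b₀)/2‖ + ‖(a₀-b₀)/2 * ((4*t^3-6*t^2+1 : ℝ):ℂ)‖
          + ‖(L:ℂ)*a₁*((t^3-2*t^2+t : ℝ):ℂ)‖ + ‖(L:ℂ)*b₁*((t^3-t^2 : ℝ):ℂ)‖ := by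
      refine (norm_add_le _ _).trans ?_
      gcongr
      refine (norm_add_le _ _).trans ?_
      gcongr
      exact norm_add_le _ _
    refine tri.trans ?_
    rw [e1]
    nlinarith [norm_nonneg a₁, norm_nonneg b₁, hL, e2, e3, e4,
      mul_nonneg hL.le (norm_nonneg a₁), mul_nonneg hL.le (norm_nonneg b₁)]
  · -- integral bound
    have hpt : ∀ x : ℝ, ‖2*c2 + 6*c3*((x:ℂ)-α)‖^2 =
        ((2*L*(-3*(a₀-b₀).re - L*(2*a₁.re+b₁.re)) + 6*(2*(a₀-b₀).re + L*(a₁.re+b₁.re))*(x-α))^2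
         + (2*L*(-3*(a₀-b₀).im - L*(2*a₁.im+b₁.im)) + 6*(2*(a₀-b₀).im + L*(a₁.im+b₁.im))*(x-α))^2)
        / L^6 := by
      intro x
      rw [normSq_eq']
      have h2 : ((L:ℂ))^2 = ((L^2 : ℝ) : ℂ) := by push_cast; ring
      have h3 : ((L:ℂ))^3 = ((L^3 : ℝ) : ℂ) := by push_cast; ring
      rw [hc2, hc3, h2, h3]
      simp only [Complex.add_re, Complex.add_im, Complex.mul_re, Complex.mul_im,
        Complex.sub_re, Complex.sub_im, Complex.div_ofReal_re, Complex.div_ofReal_im,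
        Complex.ofReal_re, Complex.ofReal_im, Complex.neg_re, Complex.neg_im,
        Complex.re_ofNat, Complex.im_ofNat]
      field_simp
      ring
    simp_rw [hpt]
    rw [intervalIntegral.integral_div,
      intervalIntegral.integral_add (Continuous.intervalIntegrable (by fun_prop) _ _)
        (Continuous.intervalIntegrable (by fun_prop) _ _)]
    have hI : ∀ A B : ℝ, (∫ x in α..β, (A + B*(x-α))^2) = A^2*L + A*B*L^2 + B^2*L^3/3 := by
      intro A B
      rw [intervalIntegral.integral_comp_sub_right (fun u => (A + B*u)^2) α]
      simp only [sub_self]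
      rw [show β - α = L from rfl]
      exact sq_integral_key L A B
    rw [hI, hI, normSq_eq' (a₀-b₀), normSq_eq' a₁, normSq_eq' b₁]
    rw [div_add_div _ _ (by positivity) (by positivity),
      div_le_div_iff₀ (by positivity) (by positivity)]
    exact energy_key L (a₀-b₀).re (a₀-b₀).im a₁.re a₁.im b₁.re b₁.im hL
end

section
/- Let X be a complex normed space and T a continuous linear operator on X. Suppose there exist nonempty open sets U, V ⊆ X and a thick set A ⊆ ℕ such that (2T^n − T^{2n})(U) ∩ V = ∅ for every n ∈ A. Then (T, T²) is not d-syndetic, i.e. there exist nonempty open sets W₀, W₁, W₂ ⊆ X such that {k ∈ ℕ : T^{-k}(W₁) ∩ T^{-2k}(W₂) ∩ W₀ ≠ ∅} is not syndetic. -/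
open Filter Set

/-- `A ⊆ ℕ` is syndetic: some `M` such that every interval of `M` consecutive
natural numbers meets `A`. -/
def Syndetic (A : Set ℕ) : Prop :=
  ∃ M : ℕ, ∀ n : ℕ, ∃ k, n ≤ k ∧ k < n + M ∧ k ∈ A

/-- `A ⊆ ℕ` is thick: it contains arbitrarily long intervals of consecutive numbers. -/
def Thick (A : Set ℕ) : Prop :=
  ∀ L : ℕ, ∃ n : ℕ, ∀ i ≤ L, n + i ∈ A

/-- If the sequence of operators `2T^n − T^{2n}` is non-transitive along a thick set
`A` (i.e. `(2T^n − T^{2n})(U) ∩ V = ∅` for all `n ∈ A`, for some fixed nonempty open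
`U, V`), then `(T, T²)` is not d-syndetic. -/
theorem not_dSyndetic_of_thick_nontransitive
    {X : Type*} [NormedAddCommGroup X] [NormedSpace ℂ X]
    (T : X →L[ℂ] X) (U V : Set X) (hU : IsOpen U) (hV : IsOpen V)
    (hUne : U.Nonempty) (hVne : V.Nonempty)
    (A : Set ℕ) (hA : Thick A)
    (h : ∀ n ∈ A, ((2 : ℂ) • T ^ n - T ^ (2 * n)) '' U ∩ V = ∅) :
    ∃ W₀ W₁ W₂ : Set X,
      IsOpen W₀ ∧ IsOpen W₁ ∧ IsOpen W₂ ∧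
      W₀.Nonempty ∧ W₁.Nonempty ∧ W₂.Nonempty ∧
      ¬ Syndetic {k : ℕ | ((T ^ k) ⁻¹' W₁ ∩ (T ^ (2 * k)) ⁻¹' W₂ ∩ W₀).Nonempty} := by
  obtain ⟨v, hv⟩ := hVne
  obtain ⟨ε, hε, hball⟩ := Metric.isOpen_iff.1 hV v hv
  refine ⟨U, Metric.ball v (ε/3), Metric.ball v (ε/3), hU, Metric.isOpen_ball,
    Metric.isOpen_ball, hUne, ⟨v, by simp [hε]⟩, ⟨v, by simp [hε]⟩, ?_⟩
  rintro ⟨M, hM⟩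
  obtain ⟨n, hn⟩ := hA M
  obtain ⟨k, hk1, hk2, x, ⟨hx1, hx2⟩, hx0⟩ := hM n
  have hkA : k ∈ A := by
    have := hn (k - n) (by omega)
    rwa [Nat.add_sub_cancel' hk1] at this
  have hmem : ((2 : ℂ) • T ^ k - T ^ (2 * k)) x ∈ V := by
    apply hball
    have h1 : dist ((T ^ k) x) v < ε / 3 := hx1
    have h2 : dist ((T ^ (2 * k)) x) v < ε / 3 := hx2
    rw [Metric.mem_ball, dist_eq_norm]
    have heq : ((2 : ℂ) • T ^ k - T ^ (2 * k)) x - v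
        = (2 : ℂ) • ((T ^ k) x - v) - ((T ^ (2 * k)) x - v) := by
      simp only [ContinuousLinearMap.sub_apply, ContinuousLinearMap.smul_apply]
      module
    rw [heq]
    calc ‖(2 : ℂ) • ((T ^ k) x - v) - ((T ^ (2 * k)) x - v)‖
        ≤ ‖(2 : ℂ) • ((T ^ k) x - v)‖ + ‖(T ^ (2 * k)) x - v‖ := norm_sub_le _ _
      _ = 2 * ‖(T ^ k) x - v‖ + ‖(T ^ (2 * k)) x - v‖ := by
          rw [norm_smul]; norm_num
      _ < 2 * (ε / 3) + ε / 3 := by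
          rw [dist_eq_norm] at h1 h2
          have := mul_lt_mul_of_pos_left h1 (by norm_num : (0:ℝ) < 2)
          linarith
      _ ≤ ε := by linarith
  have := h k hkA
  have : ((2 : ℂ) • T ^ k - T ^ (2 * k)) x ∈
      ((2 : ℂ) • T ^ k - T ^ (2 * k)) '' U ∩ V := ⟨⟨x, hx0, rfl⟩, hmem⟩
  rw [h k hkA] at this
  exact this
end

section
/- Let X be a topological vector space over ℂ, T a continuous linear operator on X, and r ≥ 1 an integer. Let U₀, U₁, …, U_r ⊆ X be nonempty open sets, n ∈ ℕ, and let O₁, O₂ ⊆ X be nonempty open sets with O₁ + O₂ ⊆ T^{-n}(U₁) ∩ T^{-2n}(U₂) ∩ … ∩ T^{-rn}(U_r) ∩ U₀. Then for every t ∈ ℕ with t ≥ n such that t − n ∈ N_T(O₁,…,O₁;O₁) ∩ N_T(O₂,…,O₂;O₂), one has t ∈ N_T(U₁,…,U_r;U₀). -/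
open Filter Set Pointwise

/-- If `O₁ + O₂ ⊆ T^{-n}(U₁) ∩ ⋯ ∩ T^{-rn}(U_r) ∩ U₀`, then every `t ≥ n` with
`t − n ∈ N_T(O₁,…,O₁;O₁) ∩ N_T(O₂,…,O₂;O₂)` satisfies `t ∈ N_T(U₁,…,U_r;U₀)`,
where `N_T(W₁,…,W_r;W₀) = {k : T^{-k}(W₁) ∩ ⋯ ∩ T^{-rk}(W_r) ∩ W₀ ≠ ∅}`. -/
theorem mem_returnSet_of_shift
    {X : Type*} [AddCommGroup X] [Module ℂ X] [TopologicalSpace X]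
    [IsTopologicalAddGroup X] [ContinuousSMul ℂ X]
    (T : X →L[ℂ] X) (r : ℕ) (hr : 1 ≤ r)
    (U₀ : Set X) (U : Fin r → Set X)
    (hU₀ : IsOpen U₀) (hU₀ne : U₀.Nonempty)
    (hU : ∀ i, IsOpen (U i)) (hUne : ∀ i, (U i).Nonempty)
    (n : ℕ) (O₁ O₂ : Set X)
    (hO₁ : IsOpen O₁) (hO₂ : IsOpen O₂) (hO₁ne : O₁.Nonempty) (hO₂ne : O₂.Nonempty)
    (hsub : O₁ + O₂ ⊆ (⋂ i : Fin r, (T ^ (((i : ℕ) + 1) * n)) ⁻¹' U i) ∩ U₀)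
    (t : ℕ) (hnt : n ≤ t)
    (h₁ : ((⋂ i : Fin r, (T ^ (((i : ℕ) + 1) * (t - n))) ⁻¹' O₁) ∩ O₁).Nonempty)
    (h₂ : ((⋂ i : Fin r, (T ^ (((i : ℕ) + 1) * (t - n))) ⁻¹' O₂) ∩ O₂).Nonempty) :
    ((⋂ i : Fin r, (T ^ (((i : ℕ) + 1) * t)) ⁻¹' U i) ∩ U₀).Nonempty := by
  obtain ⟨x, hx1, hx0⟩ := h₁
  obtain ⟨y, hy1, hy0⟩ := h₂
  refine ⟨x + y, ?_, (hsub (add_mem_add hx0 hy0)).2⟩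
  rw [mem_iInter]
  intro i
  have hmem : (T ^ (((i : ℕ) + 1) * (t - n))) (x + y) ∈ O₁ + O₂ := by
    rw [map_add]
    exact add_mem_add (mem_iInter.1 hx1 i) (mem_iInter.1 hy1 i)
  have h := mem_iInter.1 (hsub hmem).1 i
  simp only [mem_preimage] at h ⊢
  rw [show ((i : ℕ) + 1) * t = ((i : ℕ) + 1) * n + ((i : ℕ) + 1) * (t - n) by
        rw [← Nat.mul_add, Nat.add_sub_cancel' hnt],
     pow_add]
  exact h
end

section
/- Let X be a topological vector space over ℂ, T a continuous linear operator on X, and r ≥ 1 an integer. Then T is an IP*-operator if and only if the direct sum operator T ⊕ T² ⊕ … ⊕ T^r on X^r, defined by (x₁, …, x_r) ↦ (T x₁, T² x₂, …, T^r x_r), is an IP*-operator on X^r (with the product topology). -/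
open Filter Set

/-- `A ⊆ ℕ` is an IP set: there is a sequence of positive integers all of whose
nonempty finite sums lie in `A`. -/
def IPSet (A : Set ℕ) : Prop :=
  ∃ x : ℕ → ℕ, (∀ n, 0 < x n) ∧
    ∀ F : Finset ℕ, F.Nonempty → (∑ n ∈ F, x n) ∈ A

/-- `A ⊆ ℕ` is an IP* set: it meets every IP set. -/
def IPStarSet (A : Set ℕ) : Prop :=
  ∀ B : Set ℕ, IPSet B → (A ∩ B).Nonempty

/-- `S` is an IP*-operator: every return set `N(U,V)` between nonempty open sets is
an IP* set. -/
def IPStarOperator {Y : Type*} [AddCommGroup Y] [Module ℂ Y] [TopologicalSpace Y]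
    [IsTopologicalAddGroup Y] [ContinuousSMul ℂ Y] (S : Y →L[ℂ] Y) : Prop :=
  ∀ U V : Set Y, IsOpen U → IsOpen V → U.Nonempty → V.Nonempty →
    IPStarSet {n : ℕ | ((S ^ n) '' U ∩ V).Nonempty}

/-- The direct sum operator `T ⊕ T² ⊕ ⋯ ⊕ T^r` on `X^r`,
`(x₁, …, x_r) ↦ (T x₁, T² x₂, …, T^r x_r)`. -/
noncomputable def directSumPowers {X : Type*} [AddCommGroup X] [Module ℂ X]
    [TopologicalSpace X] [IsTopologicalAddGroup X] [ContinuousSMul ℂ X]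
    (T : X →L[ℂ] X) (r : ℕ) : (Fin r → X) →L[ℂ] (Fin r → X) :=
  ContinuousLinearMap.pi (fun i => (T ^ ((i : ℕ) + 1)).comp (ContinuousLinearMap.proj i))

/-! ### Auxiliary lemmas on IP and IP* sets -/

/-- Every element of an FS-set is a sum of the sequence over a nonempty finite set of indices. -/
lemma FS_eq_finsetSum {a : Stream' ℕ} {m : ℕ} (hm : m ∈ Hindman.FS a) :
    ∃ s : Finset ℕ, s.Nonempty ∧ m = ∑ i ∈ s, a.get i := by
  induction hm with
  | head' a => exact ⟨{0}, Finset.singleton_nonempty _, by simp [Stream'.head]⟩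
  | tail' a m h ih =>
      obtain ⟨s, hs, rfl⟩ := ih
      refine ⟨s.map ⟨Nat.succ, Nat.succ_injective⟩, hs.map, ?_⟩
      rw [Finset.sum_map]
      simp
  | cons' a m h ih =>
      obtain ⟨s, hs, rfl⟩ := ih
      refine ⟨insert 0 (s.map ⟨Nat.succ, Nat.succ_injective⟩),
        ⟨0, Finset.mem_insert_self _ _⟩, ?_⟩
      rw [Finset.sum_insert (by simp), Finset.sum_map]
      simp [Stream'.head]

lemma FS_pos {a : Stream' ℕ} (ha : ∀ n, 0 < a.get n) {m : ℕ} (hm : m ∈ Hindman.FS a) :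
    0 < m := by
  induction hm with
  | head' a => exact ha 0
  | tail' a m h ih => exact ih fun n => ha (n + 1)
  | cons' a m h ih => exact Nat.add_pos_left (ha 0) _

/-- An FS-set of a positive stream is an IP set. -/
lemma ipset_FS {a : Stream' ℕ} (ha : ∀ n, 0 < a.get n) : IPSet (Hindman.FS a) :=
  ⟨a.get, ha, fun F hF => Hindman.FS.finset_sum a F hF⟩

/-- Key consequence of Hindman's theorem: if `A` is IP* and `B` is IP, then
`A ∩ B` contains an IP set. -/
lemma exists_ipset_subset_inter {A B : Set ℕ} (hA : IPStarSet A) (hB : IPSet B) :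
    ∃ C : Set ℕ, IPSet C ∧ C ⊆ A ∩ B := by
  obtain ⟨x, hxpos, hxsum⟩ := hB
  set a : Stream' ℕ := x with ha
  have hget : ∀ n, a.get n = x n := fun _ => rfl
  have hFSB : Hindman.FS a ⊆ B := by
    intro m hm
    obtain ⟨s, hs, rfl⟩ := FS_eq_finsetSum hm
    simpa [hget] using hxsum s hs
  have hFSpos : ∀ n, 0 < a.get n := fun n => hxpos n
  have hcov : Hindman.FS a ⊆ ⋃₀ {A ∩ Hindman.FS a, Hindman.FS a \ A} := by
    intro m hm
    by_cases h : m ∈ A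
    · exact ⟨_, Or.inl rfl, h, hm⟩
    · exact ⟨_, Or.inr rfl, hm, h⟩
  obtain ⟨c, hc, b, hb⟩ := Hindman.FS_partition_regular a _
    ((Set.finite_singleton _).insert _) hcov
  have hbpos : ∀ n, 0 < b.get n := by
    intro n
    have hmem : b.get n ∈ Hindman.FS b := Hindman.FS.singleton b n
    rcases hc with rfl | hc
    · exact FS_pos hFSpos (hb hmem).2
    · rw [Set.mem_singleton_iff] at hc
      subst hc
      exact FS_pos hFSpos (hb hmem).1
  have hipb : IPSet (Hindman.FS b) := ipset_FS hbpos
  rcases hc with rfl | hc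
  · exact ⟨Hindman.FS b, hipb, fun m hm => ⟨(hb hm).1, hFSB (hb hm).2⟩⟩
  · rw [Set.mem_singleton_iff] at hc
    subst hc
    exfalso
    obtain ⟨m, hmA, hmB⟩ := hA _ hipb
    exact (hb hmB).2 hmA

/-- The intersection of two IP* sets is IP*. -/
lemma IPStarSet.inter {A B : Set ℕ} (hA : IPStarSet A) (hB : IPStarSet B) :
    IPStarSet (A ∩ B) := by
  intro D hD
  obtain ⟨C, hC, hCsub⟩ := exists_ipset_subset_inter hA hD
  obtain ⟨n, hnB, hnC⟩ := hB C hC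
  exact ⟨n, ⟨(hCsub hnC).1, hnB⟩, (hCsub hnC).2⟩

lemma IPStarSet.mono {A B : Set ℕ} (hAB : A ⊆ B) (hA : IPStarSet A) : IPStarSet B := by
  intro D hD
  obtain ⟨n, hn, hn'⟩ := hA D hD
  exact ⟨n, hAB hn, hn'⟩

lemma IPStarSet.univ : IPStarSet (Set.univ) := by
  intro B hB
  obtain ⟨x, hxpos, hxsum⟩ := hB
  exact ⟨∑ n ∈ {0}, x n, trivial, hxsum {0} (Finset.singleton_nonempty 0)⟩

lemma ipstar_iInter : ∀ (r : ℕ) (A : Fin r → Set ℕ), (∀ i, IPStarSet (A i)) →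
    IPStarSet (⋂ i, A i) := by
  intro r
  induction r with
  | zero =>
      intro A _
      simpa [Set.iInter_of_empty] using IPStarSet.univ
  | succ n ih =>
      intro A hA
      have h0 : IPStarSet (A 0 ∩ ⋂ i : Fin n, A i.succ) :=
        (hA 0).inter (ih _ fun i => hA i.succ)
      have heq : A 0 ∩ (⋂ i : Fin n, A i.succ) = ⋂ i, A i := by
        ext m
        simp only [Set.mem_inter_iff, Set.mem_iInter]
        constructor
        · rintro ⟨h0, hs⟩ i
          rcases Fin.eq_zero_or_eq_succ i with rfl | ⟨j, rfl⟩
          · exact h0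
          · exact hs j
        · intro h
          exact ⟨h 0, fun i => h i.succ⟩
      rw [← heq]
      exact h0

/-- Dilation preimage of an IP* set is IP*. -/
lemma IPStarSet.mul_preimage {A : Set ℕ} (hA : IPStarSet A) {k : ℕ} (hk : 0 < k) :
    IPStarSet {n : ℕ | k * n ∈ A} := by
  intro B hB
  obtain ⟨x, hxpos, hxsum⟩ := hB
  set C : Set ℕ := {m | ∃ F : Finset ℕ, F.Nonempty ∧ m = ∑ n ∈ F, k * x n} with hC
  have hCip : IPSet C := ⟨fun n => k * x n, fun n => Nat.mul_pos hk (hxpos n),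
    fun F hF => ⟨F, hF, rfl⟩⟩
  obtain ⟨m, hmA, F, hF, rfl⟩ := hA C hCip
  refine ⟨∑ n ∈ F, x n, ?_, hxsum F hF⟩
  simpa [Finset.mul_sum] using hmA

/-! ### The direct sum operator -/

lemma directSumPowers_pow_apply {X : Type*} [AddCommGroup X] [Module ℂ X]
    [TopologicalSpace X] [IsTopologicalAddGroup X] [ContinuousSMul ℂ X]
    (T : X →L[ℂ] X) (r : ℕ) (n : ℕ) (x : Fin r → X) (i : Fin r) :
    ((directSumPowers T r ^ n) x) i = (T ^ (((i : ℕ) + 1) * n)) (x i) := by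
  induction n generalizing x with
  | zero => simp
  | succ n ih =>
      rw [pow_succ']
      have h1 : (directSumPowers T r * directSumPowers T r ^ n) x
          = directSumPowers T r ((directSumPowers T r ^ n) x) := rfl
      rw [h1]
      show (T ^ ((i : ℕ) + 1)) (((directSumPowers T r ^ n) x) i)
          = (T ^ (((i : ℕ) + 1) * (n + 1))) (x i)
      rw [ih, ← ContinuousLinearMap.mul_apply, ← pow_add]
      congr 1
      ring_nf

/-- `T` is an IP*-operator iff `T ⊕ T² ⊕ ⋯ ⊕ T^r` is an IP*-operator on `X^r`. -/
theorem IPStarOperator_iff_directSum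
    {X : Type*} [AddCommGroup X] [Module ℂ X] [TopologicalSpace X]
    [IsTopologicalAddGroup X] [ContinuousSMul ℂ X]
    (T : X →L[ℂ] X) (r : ℕ) (hr : 1 ≤ r) :
    IPStarOperator T ↔ IPStarOperator (directSumPowers T r) := by
  constructor
  · -- forward direction
    intro hT U V hU hV hUne hVne
    classical
    obtain ⟨u, hu⟩ := hUne
    obtain ⟨v, hv⟩ := hVne
    obtain ⟨I, s, hs, hsub⟩ := isOpen_pi_iff.mp hU u hu
    obtain ⟨J, t, ht, htsub⟩ := isOpen_pi_iff.mp hV v hv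
    set U' : Fin r → Set X := fun i => if i ∈ I then s i else Set.univ with hU'
    set V' : Fin r → Set X := fun i => if i ∈ J then t i else Set.univ with hV'
    have hU'open : ∀ i, IsOpen (U' i) := by
      intro i; simp only [hU']; split
      · exact (hs i ‹_›).1
      · exact isOpen_univ
    have hV'open : ∀ i, IsOpen (V' i) := by
      intro i; simp only [hV']; split
      · exact (ht i ‹_›).1
      · exact isOpen_univ
    have hU'mem : ∀ i, u i ∈ U' i := by
      intro i; simp only [hU']; split
      · exact (hs i ‹_›).2
      · trivial
    have hV'mem : ∀ i, v i ∈ V' i := by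
      intro i; simp only [hV']; split
      · exact (ht i ‹_›).2
      · trivial
    have hU'sub : Set.pi Set.univ U' ⊆ U := by
      refine Set.Subset.trans ?_ hsub
      intro f hf i hi
      have := hf i (Set.mem_univ i)
      simpa only [hU', if_pos (Finset.mem_coe.mp hi)] using this
    have hV'sub : Set.pi Set.univ V' ⊆ V := by
      refine Set.Subset.trans ?_ htsub
      intro f hf i hi
      have := hf i (Set.mem_univ i)
      simpa only [hV', if_pos (Finset.mem_coe.mp hi)] using this
    -- each component return set is IP*
    have hAi : ∀ i : Fin r,
        IPStarSet {n : ℕ | ((T ^ (((i : ℕ) + 1) * n)) '' U' i ∩ V' i).Nonempty} := by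
      intro i
      have hbase : IPStarSet {m : ℕ | ((T ^ m) '' U' i ∩ V' i).Nonempty} :=
        hT (U' i) (V' i) (hU'open i) (hV'open i) ⟨u i, hU'mem i⟩ ⟨v i, hV'mem i⟩
      exact hbase.mul_preimage (Nat.succ_pos _)
    have hInter := ipstar_iInter r _ hAi
    refine hInter.mono ?_
    intro n hn
    simp only [Set.mem_iInter, Set.mem_setOf_eq] at hn
    have hn' : ∀ i : Fin r, ∃ z, z ∈ U' i ∧ (T ^ (((i : ℕ) + 1) * n)) z ∈ V' i := by
      intro i
      obtain ⟨y, ⟨z, hz, rfl⟩, hy⟩ := hn i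
      exact ⟨z, hz, hy⟩
    choose f hfU hfV using hn'
    refine ⟨(directSumPowers T r ^ n) f,
      Set.mem_image_of_mem _ (hU'sub fun i _ => hfU i), hV'sub fun i _ => ?_⟩
    rw [directSumPowers_pow_apply]
    exact hfV i
  · -- backward direction
    intro hDS U V hU hV hUne hVne
    obtain ⟨u, hu⟩ := hUne
    obtain ⟨v, hv⟩ := hVne
    have hU' : IsOpen (Set.pi Set.univ fun _ : Fin r => U) :=
      isOpen_set_pi Set.finite_univ fun _ _ => hU
    have hV' : IsOpen (Set.pi Set.univ fun _ : Fin r => V) :=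
      isOpen_set_pi Set.finite_univ fun _ _ => hV
    have h := hDS _ _ hU' hV' ⟨fun _ => u, fun _ _ => hu⟩ ⟨fun _ => v, fun _ _ => hv⟩
    refine h.mono ?_
    intro n hn
    obtain ⟨g, ⟨f, hfU, rfl⟩, hgV⟩ := hn
    refine ⟨(directSumPowers T r ^ n) f ⟨0, hr⟩, ⟨f ⟨0, hr⟩, hfU _ (Set.mem_univ _), ?_⟩,
      hgV _ (Set.mem_univ _)⟩
    rw [directSumPowers_pow_apply]
    norm_num
end
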